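/- Let k ≥ 1, n ≥ 2, C = (c_0,…,c_k) ∈ {0,1}^{k+1}, and λ = ∑_{j=2}^{n} F_j(C). Then ∑_{m=1}^{n} ((n−1)!^k/(m−1)!) · λ^{m−1} · ∏_{i=1}^{n−m} F_{i+1}(C') ≤ n!^k · exp(λ); equivalently, since ∑_m O_C(n,m) = n!^k, the ratio of the sum of the upper bounds O_Cmax(n, m + c_k − 1) over 1 ≤ m ≤ n to the sum of the C sequential optimization numbers is at most exp(λ). -/

import Mathlib

/-- `F j C = ∑_{β=0}^{k} C(k,β) · c_β / (j−1)^β`. -/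
def F (k : ℕ) (C : ℕ → ℕ) (j : ℕ) : ℚ :=
  ∑ β ∈ Finset.range (k + 1), (k.choose β : ℚ) * (C β : ℚ) / ((j : ℚ) - 1) ^ β

/-- The unsigned `C` sequential optimization numbers `O^u_C(n, m)`. -/
def Ou (k : ℕ) (C : ℕ → ℕ) (n : ℕ) (m : ℤ) : ℚ :=
  if 1 ≤ m ∧ m ≤ (n : ℤ) then
    ((n - 1).factorial : ℚ) ^ k *
      ∑ S ∈ (Finset.Icc 2 n).powersetCard (m.toNat - 1),
        (∏ j ∈ S, F k C j) * ∏ j ∈ Finset.Icc 2 n \ S, F k (fun β => 1 - C β) j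
  else 0

/-- The `C` sequential optimization numbers `O_C(n, m) = O^u_C(n, m − c_k + 1)`. -/
def Oc (k : ℕ) (C : ℕ → ℕ) (n : ℕ) (m : ℤ) : ℚ :=
  Ou k C n (m - C k + 1)

lemma F_nonneg (k : ℕ) (C : ℕ → ℕ) (j : ℕ) (hj : 2 ≤ j) : 0 ≤ F k C j := by
  apply Finset.sum_nonneg
  intro β _
  have : (1:ℚ) ≤ (j:ℚ) - 1 := by
    have : (2:ℚ) ≤ (j:ℚ) := by exact_mod_cast hj
    linarith
  positivity

lemma F_le (k : ℕ) (C : ℕ → ℕ) (hC : ∀ β ≤ k, C β ≤ 1) (i : ℕ) (hi : 1 ≤ i) :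
    F k C (i + 1) ≤ (((i:ℚ) + 1) / i) ^ k := by
  have hipos : (0:ℚ) < (i:ℚ) := by exact_mod_cast hi
  have h : (((i:ℚ) + 1) / i) ^ k = ((1:ℚ)/i + 1) ^ k := by
    rw [add_div, div_self (ne_of_gt hipos), add_comm]
  rw [h, add_pow]
  unfold F
  apply Finset.sum_le_sum
  intro β hβ
  have hc : (C β : ℚ) ≤ 1 := by
    exact_mod_cast hC β (Nat.lt_succ_iff.mp (Finset.mem_range.mp hβ))
  have : ((i:ℚ) + 1 - 1) = (i:ℚ) := by push_cast; ring
  rw [show ((i+1 : ℕ):ℚ) = (i:ℚ) + 1 by push_cast; ring, this, one_pow]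
  rw [div_eq_mul_inv, ← inv_pow, mul_one]
  have h1 : (0:ℚ) ≤ ((1:ℚ)/i)^β * (k.choose β : ℚ) := by positivity
  calc (k.choose β : ℚ) * (C β : ℚ) * ((i:ℚ)⁻¹)^β
      ≤ (k.choose β : ℚ) * 1 * ((i:ℚ)⁻¹)^β := by
        apply mul_le_mul_of_nonneg_right
        · exact mul_le_mul_of_nonneg_left hc (by positivity)
        · positivity
    _ = ((1:ℚ)/i)^β * (k.choose β : ℚ) := by rw [one_div]; ring

lemma prod_telescope (N : ℕ) : ∏ i ∈ Finset.Icc 1 N, (((i:ℚ) + 1) / i) = N + 1 := by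
  induction N with
  | zero => simp
  | succ N ih =>
    rw [Finset.prod_Icc_succ_top (by omega), ih]
    have : (0:ℚ) < (N:ℚ) + 1 := by positivity
    push_cast
    field_simp

theorem stmt16 (k n : ℕ) (hk : 1 ≤ k) (hn : 2 ≤ n)
    (C : ℕ → ℕ) (hC : ∀ β ≤ k, C β ≤ 1) :
    ((∑ m ∈ Finset.Icc 1 n,
        ((n - 1).factorial : ℚ) ^ k / ((m - 1).factorial : ℚ)
          * (∑ j ∈ Finset.Icc 2 n, F k C j) ^ (m - 1)
          * ∏ i ∈ Finset.Icc 1 (n - m), F k (fun β => 1 - C β) (i + 1) : ℚ) : ℝ)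
      ≤ (n.factorial : ℝ) ^ k
          * Real.exp ((∑ j ∈ Finset.Icc 2 n, F k C j : ℚ) : ℝ) := by
  have hC' : ∀ β ≤ k, (fun β => 1 - C β) β ≤ 1 := fun β _ => Nat.sub_le 1 _
  set lam : ℚ := ∑ j ∈ Finset.Icc 2 n, F k C j with hlam
  have hlam0 : 0 ≤ lam :=
    Finset.sum_nonneg fun j hj => F_nonneg k C j (Finset.mem_Icc.mp hj).1
  have hfac : (n.factorial : ℚ) = (n : ℚ) * ((n - 1).factorial : ℚ) := by
    exact_mod_cast (Nat.mul_factorial_pred (show n ≠ 0 by omega)).symm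
  have key : (∑ m ∈ Finset.Icc 1 n,
        ((n - 1).factorial : ℚ) ^ k / ((m - 1).factorial : ℚ)
          * lam ^ (m - 1)
          * ∏ i ∈ Finset.Icc 1 (n - m), F k (fun β => 1 - C β) (i + 1))
      ≤ ∑ m ∈ Finset.Icc 1 n,
          (n.factorial : ℚ) ^ k * (lam ^ (m - 1) / ((m - 1).factorial : ℚ)) := by
    apply Finset.sum_le_sum
    intro m hm
    obtain ⟨hm1, hmn⟩ := Finset.mem_Icc.mp hm
    have hP : ∏ i ∈ Finset.Icc 1 (n - m), F k (fun β => 1 - C β) (i + 1)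
        ≤ (n : ℚ) ^ k := by
      calc ∏ i ∈ Finset.Icc 1 (n - m), F k (fun β => 1 - C β) (i + 1)
          ≤ ∏ i ∈ Finset.Icc 1 (n - m), (((i : ℚ) + 1) / i) ^ k := by
            apply Finset.prod_le_prod
            · intro i hi
              exact F_nonneg k _ (i + 1) (by have := (Finset.mem_Icc.mp hi).1; omega)
            · intro i hi
              exact F_le k _ hC' i (Finset.mem_Icc.mp hi).1
        _ = (∏ i ∈ Finset.Icc 1 (n - m), (((i : ℚ) + 1) / i)) ^ k := by
            rw [Finset.prod_pow]
        _ = (((n - m : ℕ) : ℚ) + 1) ^ k := by rw [prod_telescope]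
        _ ≤ (n : ℚ) ^ k := by
            apply pow_le_pow_left₀ (by positivity)
            have h1 : (n - m : ℕ) + 1 ≤ n := by omega
            exact_mod_cast h1
    calc ((n - 1).factorial : ℚ) ^ k / ((m - 1).factorial : ℚ) * lam ^ (m - 1)
            * ∏ i ∈ Finset.Icc 1 (n - m), F k (fun β => 1 - C β) (i + 1)
        ≤ ((n - 1).factorial : ℚ) ^ k / ((m - 1).factorial : ℚ) * lam ^ (m - 1)
            * (n : ℚ) ^ k := by
          apply mul_le_mul_of_nonneg_left hP
          positivity
      _ = (n.factorial : ℚ) ^ k * (lam ^ (m - 1) / ((m - 1).factorial : ℚ)) := by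
          rw [hfac, mul_pow]; ring
  calc ((∑ m ∈ Finset.Icc 1 n,
        ((n - 1).factorial : ℚ) ^ k / ((m - 1).factorial : ℚ)
          * lam ^ (m - 1)
          * ∏ i ∈ Finset.Icc 1 (n - m), F k (fun β => 1 - C β) (i + 1) : ℚ) : ℝ)
      ≤ ((∑ m ∈ Finset.Icc 1 n,
          (n.factorial : ℚ) ^ k * (lam ^ (m - 1) / ((m - 1).factorial : ℚ)) : ℚ) : ℝ) := by
        exact_mod_cast key
    _ = (n.factorial : ℝ) ^ k * ∑ m ∈ Finset.Icc 1 n,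
          ((lam : ℝ) ^ (m - 1) / ((m - 1).factorial : ℝ)) := by
        rw [← Finset.mul_sum]; push_cast; ring
    _ = (n.factorial : ℝ) ^ k * ∑ i ∈ Finset.range n,
          ((lam : ℝ) ^ i / (i.factorial : ℝ)) := by
        congr 1
        rw [← Finset.Ico_add_one_right_eq_Icc, Finset.sum_Ico_eq_sum_range]
        simp
    _ ≤ (n.factorial : ℝ) ^ k * Real.exp ((lam : ℚ) : ℝ) := by
        apply mul_le_mul_of_nonneg_left _ (by positivity)
        exact Real.sum_le_exp_of_nonneg (by exact_mod_cast hlam0) n
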